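/- Let (X, ε) be a 2-colored graph with an odd involution τ. Then there is an isomorphism of 2-colored graphs φ : X → K_2 × (X/τ) (where K_2 × (X/τ) is 2-colored by the first projection) satisfying φ ∘ τ = τ_can ∘ φ, where τ_can is the canonical odd involution of K_2 × (X/τ). -/

import Mathlib

/-- A graph: a vertex type with a symmetric edge relation (loops allowed). -/
structure SymGraph where
  V : Type
  E : V → V → Prop
  symm : ∀ ⦃x y⦄, E x y → E y x

/-- Graph homomorphisms. -/
def SymGraph.Hom (G H : SymGraph) : Type :=
  {f : G.V → H.V // ∀ ⦃x y⦄, G.E x y → H.E (f x) (f y)}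

/-- Graph isomorphisms: bijective homomorphisms whose inverse is a homomorphism. -/
structure SymGraph.Iso (G H : SymGraph) extends G.V ≃ H.V where
  edge_iff : ∀ x y, G.E x y ↔ H.E (toEquiv x) (toEquiv y)

/-- The complete graph `K₂` on two vertices. -/
def K2 : SymGraph := ⟨Fin 2, fun x y => x ≠ y, fun _ _ h => h.symm⟩

/-- The tensor (categorical) product of graphs. -/
def SymGraph.tensor (G H : SymGraph) : SymGraph :=
  ⟨G.V × H.V, fun p q => G.E p.1 q.1 ∧ H.E p.2 q.2,
   fun _ _ h => ⟨G.symm h.1, H.symm h.2⟩⟩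

/-- No isolated vertices. -/
def SymGraph.NoIsolated (G : SymGraph) : Prop := ∀ x, ∃ y, G.E x y

/-- The box complex `B(G)`: pairs of nonempty subsets `(σ, τ)` with `σ × τ ⊆ E(G)`. -/
def SymGraph.Box (G : SymGraph) : Type :=
  {p : Set G.V × Set G.V //
    p.1.Nonempty ∧ p.2.Nonempty ∧ ∀ x ∈ p.1, ∀ y ∈ p.2, G.E x y}

instance (G : SymGraph) : PartialOrder G.Box where
  le a b := a.1.1 ⊆ b.1.1 ∧ a.1.2 ⊆ b.1.2
  le_refl a := ⟨subset_rfl, subset_rfl⟩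
  le_trans a b c h1 h2 := ⟨h1.1.trans h2.1, h1.2.trans h2.2⟩
  le_antisymm a b h1 h2 :=
    Subtype.ext (Prod.ext (h1.1.antisymm h2.1) (h1.2.antisymm h2.2))

/-- The canonical involution `(σ,τ) ↦ (τ,σ)` of the box complex. -/
def SymGraph.Box.flip {G : SymGraph} (p : G.Box) : G.Box :=
  ⟨(p.1.2, p.1.1), p.2.2.1, p.2.1, fun x hx y hy => G.symm (p.2.2.2 y hy x hx)⟩

/-- A 2-coloring of a graph: a graph homomorphism to `K₂`. -/
def SymGraph.TwoColoring (X : SymGraph) (ε : X.V → Fin 2) : Prop :=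
  ∀ ⦃x y⦄, X.E x y → ε x ≠ ε y

/-- The quotient of a graph by an involution `τ`: vertices are the orbits `{x, τ x}`,
and two orbits are adjacent iff some representatives are adjacent. -/
def SymGraph.quot (X : SymGraph) (τ : X.V → X.V) : SymGraph where
  V := {S : Set X.V // ∃ x, S = {x, τ x}}
  E α β := ∃ a ∈ α.1, ∃ b ∈ β.1, X.E a b
  symm := fun _ _ ⟨a, ha, b, hb, h⟩ => ⟨b, hb, a, ha, X.symm h⟩

/-!
An odd involution pairs each vertex `x` with the vertex `τ x` of the other colour, so
`x ↦ (ε x, {x, τ x})` is a bijection `X → K₂ × X/τ` turning `τ` into the colour flip. It reflects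
edges because an edge between the orbits of `x` and `y`, where `ε x ≠ ε y`, joins `x` to `y` or
`τ x` to `τ y` (the two other pairs are monochromatic), and `τ` carries the latter to the former.
-/

theorem Fin.eq_add_one_of_ne {a b : Fin 2} (h : a ≠ b) : a = b + 1 := by
  revert a b; decide

namespace SymGraph

variable {X : SymGraph} {τ : X.V → X.V} {ε : X.V → Fin 2}

def orbit (τ : X.V → X.V) (x : X.V) : (X.quot τ).V := ⟨{x, τ x}, x, rfl⟩

theorem mem_orbit_iff {a x : X.V} : a ∈ (orbit τ x).1 ↔ a = x ∨ a = τ x := Iff.rfl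

theorem orbit_apply (invol : ∀ x, τ (τ x) = x) (x : X.V) : orbit τ (τ x) = orbit τ x :=
  Subtype.ext <| by simp only [orbit, invol, Set.pair_comm]

theorem eq_of_orbit_eq (odd : ∀ x, ε (τ x) ≠ ε x) {x y : X.V} (hc : ε x = ε y)
    (ho : orbit τ x = orbit τ y) : x = y := by
  have hx : x ∈ (orbit τ y).1 := ho ▸ Or.inl rfl
  rcases mem_orbit_iff.1 hx with rfl | rfl
  · rfl
  · exact absurd hc (odd y)

theorem exists_color_orbit_eq (invol : ∀ x, τ (τ x) = x) (odd : ∀ x, ε (τ x) ≠ ε x)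
    (i : Fin 2) (x : X.V) : ∃ y, ε y = i ∧ orbit τ y = orbit τ x := by
  by_cases hx : ε x = i
  · exact ⟨x, hx, rfl⟩
  · exact ⟨τ x, (Fin.eq_add_one_of_ne (odd x)).trans (Fin.eq_add_one_of_ne (Ne.symm hx)).symm,
      orbit_apply invol x⟩

theorem adj_of_quot_adj (hε : X.TwoColoring ε) (hom : ∀ ⦃x y⦄, X.E x y → X.E (τ x) (τ y))
    (invol : ∀ x, τ (τ x) = x) (odd : ∀ x, ε (τ x) ≠ ε x) {x y : X.V} (hc : ε x ≠ ε y)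
    (h : (X.quot τ).E (orbit τ x) (orbit τ y)) : X.E x y := by
  obtain ⟨a, ha, b, hb, hab⟩ := h
  have hedge : ∀ {u v}, X.E u v → ε v = ε u + 1 := fun huv => Fin.eq_add_one_of_ne (hε huv).symm
  have hτ : ∀ u, ε (τ u) = ε u + 1 := fun u => Fin.eq_add_one_of_ne (odd u)
  rcases mem_orbit_iff.1 ha with rfl | rfl <;> rcases mem_orbit_iff.1 hb with rfl | rfl
  · exact hab
  · exact absurd (add_right_cancel ((hedge hab).symm.trans (hτ y))) hc
  · exact absurd (add_right_cancel ((hτ x).symm.trans (hedge (X.symm hab)))) hc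
  · simpa only [invol] using hom hab

noncomputable def kroneckerIso (hε : X.TwoColoring ε) (hom : ∀ ⦃x y⦄, X.E x y → X.E (τ x) (τ y))
    (invol : ∀ x, τ (τ x) = x) (odd : ∀ x, ε (τ x) ≠ ε x) : X.Iso (K2.tensor (X.quot τ)) where
  toEquiv := Equiv.ofBijective (fun x => (ε x, orbit τ x))
    ⟨fun _ _ h => eq_of_orbit_eq odd (congrArg Prod.fst h) (congrArg Prod.snd h),
     fun ⟨i, _, x, hS⟩ => by
      obtain ⟨y, hy, ho⟩ := exists_color_orbit_eq invol odd i x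
      exact ⟨y, Prod.ext hy (ho.trans (Subtype.ext hS.symm))⟩⟩
  edge_iff _ _ :=
    ⟨fun h => ⟨hε h, _, Or.inl rfl, _, Or.inl rfl, h⟩,
     fun h => adj_of_quot_adj hε hom invol odd h.1 h.2⟩

end SymGraph

/-- if `(X, ε)` is a 2-colored graph with an odd involution `τ`, then there
is an isomorphism of 2-colored graphs `φ : X → K₂ × (X/τ)` (the target 2-colored by the
first projection) intertwining `τ` with the canonical odd involution of `K₂ × (X/τ)`. -/
theorem two_colored_graph_with_odd_involution_is_kronecker
    (X : SymGraph) (ε : X.V → Fin 2) (hε : X.TwoColoring ε)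
    (τ : X.V → X.V) (hom : ∀ ⦃x y⦄, X.E x y → X.E (τ x) (τ y))
    (invol : ∀ x, τ (τ x) = x) (odd : ∀ x, ε (τ x) ≠ ε x) :
    ∃ φ : X.Iso (K2.tensor (X.quot τ)),
      (∀ x, (φ.toEquiv x).1 = ε x) ∧
      (∀ x, φ.toEquiv (τ x) = (fun q : Fin 2 × (X.quot τ).V => (q.1 + 1, q.2)) (φ.toEquiv x)) :=
  ⟨SymGraph.kroneckerIso hε hom invol odd, fun _ => rfl,
   fun x => Prod.ext (Fin.eq_add_one_of_ne (odd x)) (SymGraph.orbit_apply invol x)⟩
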